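/- arXiv:2511.09115 — 5 statements merged into one kernel-verified Lean document; each statement's English description precedes it below -/
import Mathlib

section
/- Let E be a regular (T₃) topological space and f : [0,1] → E a function that is right-continuous at every t ∈ [0,1) and has a left limit f(t−) at every t ∈ (0,1]. Then the extension of f to the split interval Î defined by sending t+ to f(t) and t− to f(t−) is continuous on Î. -/
open Set Filter Topology

/-- Points of the split interval: pairs (t, b) with lexicographic order,
where `b = false` represents `t−` and `b = true` represents `t+`. -/
abbrev SIP := ℝ ×ₗ Bool

/-- The split interval Î = {t− : t ∈ (0,1]} ∪ {t+ : t ∈ [0,1]}. -/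
def SI : Type := {p : SIP // (ofLex p).1 ∈ Set.Icc (0:ℝ) 1 ∧ ((ofLex p).1 = 0 → (ofLex p).2 = true)}

noncomputable instance : LinearOrder SI := Subtype.instLinearOrder _
noncomputable instance : TopologicalSpace SI := Preorder.topology SI
instance : OrderTopology SI := ⟨rfl⟩

/-- The point `t+` of the split interval, for `t ∈ [0,1]`. -/
def siPlus (t : ℝ) (ht : t ∈ Set.Icc (0:ℝ) 1) : SI :=
  ⟨toLex (t, true), ht, fun _ => rfl⟩

/-- The point `t−` of the split interval, for `t ∈ (0,1]`. -/
def siMinus (t : ℝ) (ht : t ∈ Set.Ioc (0:ℝ) 1) : SI :=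
  ⟨toLex (t, false), ⟨ht.1.le, ht.2⟩, fun h => absurd h ht.1.ne'⟩

/-!
In `Î` the point `t+` covers `t−`, so `t+` is isolated from the left and `t−` from the right,
and continuity reduces to right continuity at `t+` and left continuity at `t−`. For the latter,
take a closed neighbourhood `C` of `f(t−)`: then `f` maps some `(r, t)` into `C`, and so does
the extension at every `s±` with `s ∈ (r, t)`, since `f(s−)` is a limit of values of `f` on
`(r, s)` and `C` is closed. Closed neighbourhoods form a basis because `E` is regular.
-/

theorem Prod.Lex.toLex_covBy_toLex {α β : Type*} [PartialOrder α] [Preorder β] (a : α)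
    {b₁ b₂ : β} (h : b₁ ⋖ b₂) : toLex (a, b₁) ⋖ toLex (a, b₂) := by
  refine ⟨Prod.Lex.toLex_lt_toLex.2 (Or.inr ⟨rfl, h.lt⟩), fun z h₁ h₂ => ?_⟩
  rcases Prod.Lex.toLex_lt_toLex.1 h₁ with h₁ | ⟨rfl, h₁⟩ <;>
    rcases Prod.Lex.toLex_lt_toLex.1 h₂ with h₂ | ⟨h₂, h₂'⟩
  · exact h₁.not_gt h₂
  · exact h₁.ne h₂.symm
  · exact h₂.ne rfl
  · exact h.2 h₁ h₂'

namespace SI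

def proj (v : SI) : ℝ := (ofLex v.1).1

@[simp]
theorem proj_siPlus (t : ℝ) (ht : t ∈ Icc (0 : ℝ) 1) : (siPlus t ht).proj = t := rfl

@[simp]
theorem proj_siMinus (t : ℝ) (ht : t ∈ Ioc (0 : ℝ) 1) : (siMinus t ht).proj = t := rfl

theorem eq_siPlus_or_eq_siMinus (v : SI) :
    (∃ t ht, v = siPlus t ht) ∨ ∃ t ht, v = siMinus t ht := by
  obtain ⟨p, hp, hp0⟩ := v
  rcases Bool.eq_false_or_eq_true (ofLex p).2 with hb | hb
  · exact Or.inl ⟨_, hp, Subtype.ext (congrArg toLex (Prod.ext rfl hb))⟩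
  · have ht : (ofLex p).1 ∈ Ioc (0 : ℝ) 1 :=
      ⟨hp.1.lt_of_ne fun h => by simp [hp0 h.symm] at hb, hp.2⟩
    exact Or.inr ⟨_, ht, Subtype.ext (congrArg toLex (Prod.ext rfl hb))⟩

theorem siPlus_lt_iff {a : ℝ} (ha : a ∈ Icc (0 : ℝ) 1) (v : SI) :
    siPlus a ha < v ↔ a < v.proj := by
  rcases eq_siPlus_or_eq_siMinus v with ⟨t, ht, rfl⟩ | ⟨t, ht, rfl⟩ <;>
    exact Prod.Lex.toLex_lt_toLex.trans (by simp)

theorem lt_siMinus_iff {b : ℝ} (hb : b ∈ Ioc (0 : ℝ) 1) (v : SI) :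
    v < siMinus b hb ↔ v.proj < b := by
  rcases eq_siPlus_or_eq_siMinus v with ⟨t, ht, rfl⟩ | ⟨t, ht, rfl⟩ <;>
    exact Prod.Lex.toLex_lt_toLex.trans (by simp)

theorem siMinus_covBy_siPlus {t : ℝ} (ht : t ∈ Ioc (0 : ℝ) 1) :
    siMinus t ht ⋖ siPlus t (Ioc_subset_Icc_self ht) :=
  CovBy.of_image (OrderEmbedding.subtype _)
    (Prod.Lex.toLex_covBy_toLex t (Bool.covBy_iff.2 rfl))

theorem isBot_siPlus_zero (h : (0 : ℝ) ∈ Icc (0 : ℝ) 1) : IsBot (siPlus 0 h) := fun v => by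
  rcases eq_siPlus_or_eq_siMinus v with ⟨t, ht, rfl⟩ | ⟨t, ht, rfl⟩
  · rcases ht.1.eq_or_lt with rfl | ht0
    · rfl
    · exact ((siPlus_lt_iff h (siPlus t ht)).2 ht0).le
  · exact ((siPlus_lt_iff h (siMinus t ht)).2 ht.1).le

theorem isTop_siPlus_one (h : (1 : ℝ) ∈ Icc (0 : ℝ) 1) : IsTop (siPlus 1 h) := fun v => by
  have siPlus_le : ∀ t ht, siPlus t ht ≤ siPlus 1 h := fun t ht => by
    rcases ht.2.eq_or_lt with rfl | ht1
    · rfl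
    · exact ((siPlus_lt_iff ht (siPlus 1 h)).2 ht1).le
  rcases eq_siPlus_or_eq_siMinus v with ⟨t, ht, rfl⟩ | ⟨t, ht, rfl⟩
  · exact siPlus_le t ht
  · exact (siMinus_covBy_siPlus ht).lt.le.trans (siPlus_le t _)

theorem nhdsGT_siPlus_one (h : (1 : ℝ) ∈ Icc (0 : ℝ) 1) : 𝓝[>] siPlus 1 h = ⊥ :=
  nhdsGT_eq_bot_iff.2 (Or.inl (isTop_siPlus_one h))

theorem nhdsLT_siPlus {t : ℝ} (ht : t ∈ Icc (0 : ℝ) 1) : 𝓝[<] siPlus t ht = ⊥ := by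
  rcases ht.1.eq_or_lt with rfl | ht0
  · exact nhdsLT_eq_bot_iff.2 (Or.inl (isBot_siPlus_zero ht))
  · exact (siMinus_covBy_siPlus ⟨ht0, ht.2⟩).nhdsLT

theorem nhdsGT_siMinus {t : ℝ} (ht : t ∈ Ioc (0 : ℝ) 1) : 𝓝[>] siMinus t ht = ⊥ :=
  (siMinus_covBy_siPlus ht).nhdsGT

theorem eventually_proj_mem_Ioo_nhdsGT_siPlus {t r : ℝ} (ht : t ∈ Ico (0 : ℝ) 1) (htr : t < r) :
    ∀ᶠ v in 𝓝[>] siPlus t (Ico_subset_Icc_self ht), v.proj ∈ Ioo t r := by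
  have hr : min r 1 ∈ Ioc (0 : ℝ) 1 := ⟨ht.1.trans_lt (lt_min htr ht.2), min_le_right _ _⟩
  have hlt : t < min r 1 := lt_min htr ht.2
  filter_upwards [Ioo_mem_nhdsGT ((siPlus_lt_iff _ (siMinus _ hr)).2 hlt)] with v hv
  exact ⟨(siPlus_lt_iff _ v).1 hv.1, ((lt_siMinus_iff hr v).1 hv.2).trans_le (min_le_left _ _)⟩

theorem eventually_proj_mem_Ioo_nhdsLT_siMinus {t r : ℝ} (ht : t ∈ Ioc (0 : ℝ) 1) (hrt : r < t) :
    ∀ᶠ v in 𝓝[<] siMinus t ht, v.proj ∈ Ioo r t := by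
  have hr : max r 0 ∈ Icc (0 : ℝ) 1 := ⟨le_max_right _ _, (max_lt hrt ht.1).le.trans ht.2⟩
  have hlt : max r 0 < t := max_lt hrt ht.1
  filter_upwards [Ioo_mem_nhdsLT ((lt_siMinus_iff ht (siPlus _ hr)).2 hlt)] with v hv
  exact ⟨(le_max_left _ _).trans_lt ((siPlus_lt_iff hr v).1 hv.1), (lt_siMinus_iff ht v).1 hv.2⟩

section Extension

variable {E : Type*} {f g : ℝ → E}

def extend (f g : ℝ → E) (v : SI) : E :=
  if (ofLex v.1).2 = true then f (ofLex v.1).1 else g (ofLex v.1).1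

@[simp]
theorem extend_siPlus (t : ℝ) (ht : t ∈ Icc (0 : ℝ) 1) : extend f g (siPlus t ht) = f t :=
  if_pos rfl

@[simp]
theorem extend_siMinus (t : ℝ) (ht : t ∈ Ioc (0 : ℝ) 1) : extend f g (siMinus t ht) = g t :=
  if_neg Bool.false_ne_true

variable [TopologicalSpace E]

theorem extend_mem_of_mapsTo (hl : ∀ t ∈ Ioc (0 : ℝ) 1, Tendsto f (𝓝[<] t) (𝓝 (g t)))
    {C : Set E} (hC : IsClosed C) {a b : ℝ} (hfC : MapsTo f (Ioo a b) C) {v : SI}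
    (hv : v.proj ∈ Ioo a b) : extend f g v ∈ C := by
  rcases eq_siPlus_or_eq_siMinus v with ⟨t, ht, rfl⟩ | ⟨t, ht, rfl⟩
  · exact hfC hv
  · exact hC.mem_of_tendsto (hl t ht)
      (mem_of_superset (Ioo_mem_nhdsLT hv.1) fun x hx => hfC ⟨hx.1, hx.2.trans hv.2⟩)

variable [RegularSpace E]

theorem continuousWithinAt_extend_Ioi_siPlus
    (hr : ∀ t ∈ Ico (0 : ℝ) 1, Tendsto f (𝓝[>] t) (𝓝 (f t)))
    (hl : ∀ t ∈ Ioc (0 : ℝ) 1, Tendsto f (𝓝[<] t) (𝓝 (g t))) {t : ℝ} (ht : t ∈ Icc (0 : ℝ) 1) :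
    ContinuousWithinAt (extend f g) (Ioi (siPlus t ht)) (siPlus t ht) := by
  rcases ht.2.eq_or_lt with rfl | ht1
  · rw [ContinuousWithinAt, nhdsGT_siPlus_one]
    exact tendsto_bot
  rw [ContinuousWithinAt, extend_siPlus, (closed_nhds_basis (f t)).tendsto_right_iff]
  rintro C ⟨hCn, hC⟩
  obtain ⟨r, htr, hfC⟩ :=
    (nhdsGT_basis t).eventually_iff.1 ((hr t ⟨ht.1, ht1⟩).eventually_mem hCn)
  filter_upwards [eventually_proj_mem_Ioo_nhdsGT_siPlus ⟨ht.1, ht1⟩ htr] with v hv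
  exact extend_mem_of_mapsTo hl hC hfC hv

theorem continuousWithinAt_extend_Iio_siMinus
    (hl : ∀ t ∈ Ioc (0 : ℝ) 1, Tendsto f (𝓝[<] t) (𝓝 (g t))) {t : ℝ} (ht : t ∈ Ioc (0 : ℝ) 1) :
    ContinuousWithinAt (extend f g) (Iio (siMinus t ht)) (siMinus t ht) := by
  rw [ContinuousWithinAt, extend_siMinus, (closed_nhds_basis (g t)).tendsto_right_iff]
  rintro C ⟨hCn, hC⟩
  obtain ⟨r, hrt, hfC⟩ := (nhdsLT_basis t).eventually_iff.1 ((hl t ht).eventually_mem hCn)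
  filter_upwards [eventually_proj_mem_Ioo_nhdsLT_siMinus ht hrt] with v hv
  exact extend_mem_of_mapsTo hl hC hfC hv

end Extension

end SI

/-- If `E` is regular (T₃) and `f : [0,1] → E` is right-continuous on `[0,1)` with left
limits `g t` at every `t ∈ (0,1]`, then the extension of `f` to the split interval
sending `t+` to `f t` and `t−` to `g t` is continuous. -/
theorem splitInterval_extension_continuous {E : Type*} [TopologicalSpace E] [T3Space E]
    (f g : ℝ → E)
    (hr : ∀ t ∈ Set.Ico (0:ℝ) 1, Tendsto f (𝓝[>] t) (𝓝 (f t)))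
    (hl : ∀ t ∈ Set.Ioc (0:ℝ) 1, Tendsto f (𝓝[<] t) (𝓝 (g t))) :
    Continuous (fun v : SI =>
      if (ofLex v.1).2 = true then f (ofLex v.1).1 else g (ofLex v.1).1) := by
  show Continuous (SI.extend f g)
  refine continuous_iff_continuousAt.2 fun v => continuousAt_iff_continuous_left'_right'.2 ?_
  rcases SI.eq_siPlus_or_eq_siMinus v with ⟨t, ht, rfl⟩ | ⟨t, ht, rfl⟩
  · refine ⟨?_, SI.continuousWithinAt_extend_Ioi_siPlus hr hl ht⟩
    rw [ContinuousWithinAt, SI.nhdsLT_siPlus]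
    exact tendsto_bot
  · refine ⟨SI.continuousWithinAt_extend_Iio_siMinus hl ht, ?_⟩
    rw [ContinuousWithinAt, SI.nhdsGT_siMinus]
    exact tendsto_bot
end

section
/- Let E be a regular (T₃) topological space and f : [0,1] → E a càdlàg function. Then the set {f(t) : t ∈ [0,1]} ∪ {f(t−) : t ∈ (0,1]} is a compact subset of E, where f(t−) denotes the left limit of f at t. -/
open Set Filter Topology

/-!
An ultrafilter on the set is the image under `f` or `g` of an ultrafilter on `[0,1]`. The latter
converges to some `t` from the left, from the right or at `t` itself, so along it `f` tends to
`f(t−)` or `f t`, a point of the set. The same holds for `g`, because in a regular space `g`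
inherits the one-sided limits of `f`: a closed neighbourhood of the limit contains `f` near `t`,
hence also the left limits `g s` taken there.
-/

theorem Filter.Tendsto.of_eventually_tendsto {α β Y : Type*} [TopologicalSpace Y]
    [RegularSpace Y] {f : α → Y} {g : β → Y} {l : Filter α} {l' : Filter β} {L : β → Filter α}
    {y : Y} (hf : Tendsto f l (𝓝 y)) (hL : ∀ s ∈ l, ∀ᶠ b in l', s ∈ L b)
    (hg : ∀ᶠ b in l', (L b).NeBot ∧ Tendsto f (L b) (𝓝 (g b))) : Tendsto g l' (𝓝 y) := by
  refine (closed_nhds_basis y).tendsto_right_iff.2 fun V ⟨hV, hVc⟩ => ?_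
  filter_upwards [hL _ (hf hV), hg] with b hb ⟨_, hgb⟩
  exact hVc.mem_of_tendsto hgb hb

theorem Filter.Tendsto.of_eventually_tendsto_nhdsLT {α Y : Type*} [TopologicalSpace α]
    [Preorder α] [∀ x : α, (𝓝[<] x).NeBot] [TopologicalSpace Y] [RegularSpace Y]
    {f g : α → Y} {A : Set α} (hA : IsOpen A) {t : α} {y : Y} (hf : Tendsto f (𝓝[A] t) (𝓝 y))
    (hg : ∀ᶠ s in 𝓝[A] t, Tendsto f (𝓝[<] s) (𝓝 (g s))) : Tendsto g (𝓝[A] t) (𝓝 y) := by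
  refine hf.of_eventually_tendsto (fun S hS => ?_) (hg.mono fun s hs => ⟨inferInstance, hs⟩)
  filter_upwards [eventually_eventually_nhdsWithin.2 hS, self_mem_nhdsWithin] with s hs hsA
  rw [hA.nhdsWithin_eq hsA] at hs
  exact mem_nhdsWithin_of_mem_nhds hs

theorem Ultrafilter.exists_tendsto_of_tendsto_nhdsLT_nhdsGT {α Y : Type*} [TopologicalSpace α]
    [LinearOrder α] [TopologicalSpace Y] {𝒱 : Ultrafilter α} {x : α} (hx : ↑𝒱 ≤ 𝓝 x)
    {s : Set α} (hs : s ∈ 𝒱) {h : α → Y} {K : Set Y} (hsK : MapsTo h s K)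
    (hleft : (s ∩ Iio x).Nonempty → ∃ y ∈ K, Tendsto h (𝓝[<] x) (𝓝 y))
    (hright : (s ∩ Ioi x).Nonempty → ∃ y ∈ K, Tendsto h (𝓝[>] x) (𝓝 y)) :
    ∃ y ∈ K, Tendsto h 𝒱 (𝓝 y) := by
  have hcover : Iio x ∪ ({x} ∪ Ioi x) ∈ 𝒱 := by
    rw [← union_assoc, Iio_union_right, Iic_union_Ioi]
    exact univ_mem
  rcases Ultrafilter.union_mem_iff.1 hcover with hlt | hxgt
  · obtain ⟨y, hyK, hy⟩ := hleft (𝒱.nonempty_of_mem (inter_mem hs hlt))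
    exact ⟨y, hyK, hy.mono_left (le_inf hx (le_principal_iff.2 hlt))⟩
  rcases Ultrafilter.union_mem_iff.1 hxgt with heq | hgt
  · obtain ⟨z, hzs, rfl⟩ := 𝒱.nonempty_of_mem (inter_mem hs heq)
    exact ⟨h z, hsK hzs, (tendsto_pure_nhds h z).mono_left (le_pure_iff.2 heq)⟩
  · obtain ⟨y, hyK, hy⟩ := hright (𝒱.nonempty_of_mem (inter_mem hs hgt))
    exact ⟨y, hyK, hy.mono_left (le_inf hx (le_principal_iff.2 hgt))⟩

theorem IsCompact.exists_le_nhds_of_image_mem {X Y : Type*} [TopologicalSpace X]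
    [TopologicalSpace Y] {c s : Set X} (hc : IsCompact c) (hsc : s ⊆ c) {h : X → Y} {K : Set Y}
    (hK : ∀ x ∈ c, ∀ 𝒱 : Ultrafilter X, ↑𝒱 ≤ 𝓝 x → s ∈ 𝒱 → ∃ y ∈ K, Tendsto h 𝒱 (𝓝 y))
    {𝒰 : Ultrafilter Y} (h𝒰 : h '' s ∈ 𝒰) : ∃ y ∈ K, ↑𝒰 ≤ 𝓝 y := by
  set 𝒱 := Ultrafilter.ofComapInfPrincipal h𝒰
  have hs𝒱 : s ∈ 𝒱 := Ultrafilter.ofComapInfPrincipal_mem h𝒰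
  obtain ⟨x, hxc, hx⟩ := hc.ultrafilter_le_nhds' 𝒱 (mem_of_superset hs𝒱 hsc)
  obtain ⟨y, hyK, hy⟩ := hK x hxc 𝒱 hx hs𝒱
  refine ⟨y, hyK, ?_⟩
  rwa [← Ultrafilter.ofComapInfPrincipal_eq_of_map h𝒰]

theorem Ultrafilter.exists_le_nhds_of_image_Icc_mem {α Y : Type*} [TopologicalSpace α]
    [LinearOrder α] [CompactIccSpace α] [TopologicalSpace Y] {a b : α} {s : Set α}
    (hs : s ⊆ Icc a b) {h : α → Y} {K : Set Y} (hsK : MapsTo h s K)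
    (hleft : ∀ t ∈ Ioc a b, ∃ y ∈ K, Tendsto h (𝓝[<] t) (𝓝 y))
    (hright : ∀ t ∈ Ico a b, ∃ y ∈ K, Tendsto h (𝓝[>] t) (𝓝 y))
    {𝒰 : Ultrafilter Y} (h𝒰 : h '' s ∈ 𝒰) : ∃ y ∈ K, ↑𝒰 ≤ 𝓝 y := by
  refine isCompact_Icc.exists_le_nhds_of_image_mem hs (fun x hx 𝒱 hx𝒱 hs𝒱 => ?_) h𝒰
  refine 𝒱.exists_tendsto_of_tendsto_nhdsLT_nhdsGT hx𝒱 hs𝒱 hsK ?_ ?_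
  · rintro ⟨t, hts, htx⟩
    exact hleft x ⟨(hs hts).1.trans_lt htx, hx.2⟩
  · rintro ⟨t, hts, hxt⟩
    exact hright x ⟨hx.1, hxt.trans_le (hs hts).2⟩

/-- If `E` is regular (T₃) and `f : [0,1] → E` is càdlàg, with left limits `g t` at each
`t ∈ (0,1]`, then the set `{f t : t ∈ [0,1]} ∪ {f(t−) : t ∈ (0,1]}` is compact. -/
theorem cadlag_range_union_leftLimits_isCompact {E : Type*} [TopologicalSpace E] [T3Space E]
    (f g : ℝ → E)
    (hr : ∀ t ∈ Set.Ico (0:ℝ) 1, Tendsto f (𝓝[>] t) (𝓝 (f t)))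
    (hl : ∀ t ∈ Set.Ioc (0:ℝ) 1, Tendsto f (𝓝[<] t) (𝓝 (g t))) :
    IsCompact (f '' Set.Icc 0 1 ∪ g '' Set.Ioc 0 1) := by
  have hgl : ∀ t ∈ Ioc (0:ℝ) 1, Tendsto g (𝓝[<] t) (𝓝 (g t)) := fun t ht =>
    (hl t ht).of_eventually_tendsto_nhdsLT isOpen_Iio <| mem_of_superset (Ioo_mem_nhdsLT ht.1)
      fun s hs => hl s ⟨hs.1, hs.2.le.trans ht.2⟩
  have hgr : ∀ t ∈ Ico (0:ℝ) 1, Tendsto g (𝓝[>] t) (𝓝 (f t)) := fun t ht =>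
    (hr t ht).of_eventually_tendsto_nhdsLT isOpen_Ioi <| mem_of_superset (Ioo_mem_nhdsGT ht.2)
      fun s hs => hl s ⟨ht.1.trans_lt hs.1, hs.2.le⟩
  have hgK : ∀ t ∈ Ioc (0:ℝ) 1, g t ∈ f '' Icc 0 1 ∪ g '' Ioc 0 1 := fun t ht =>
    Or.inr (mem_image_of_mem g ht)
  have hfK : ∀ t ∈ Icc (0:ℝ) 1, f t ∈ f '' Icc 0 1 ∪ g '' Ioc 0 1 := fun t ht =>
    Or.inl (mem_image_of_mem f ht)
  refine isCompact_iff_ultrafilter_le_nhds'.2 fun 𝒰 h𝒰 => ?_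
  rcases Ultrafilter.union_mem_iff.1 h𝒰 with hf | hg
  · exact Ultrafilter.exists_le_nhds_of_image_Icc_mem subset_rfl hfK
      (fun t ht => ⟨g t, hgK t ht, hl t ht⟩)
      (fun t ht => ⟨f t, hfK t (Ico_subset_Icc_self ht), hr t ht⟩) hf
  · exact Ultrafilter.exists_le_nhds_of_image_Icc_mem Ioc_subset_Icc_self hgK
      (fun t ht => ⟨g t, hgK t ht, hgl t ht⟩)
      (fun t ht => ⟨f t, hfK t (Ico_subset_Icc_self ht), hgr t ht⟩) hg
end

section
/- Let E be a regular (T₃) topological space and f : [0,1] → E a càdlàg function. Then the range f([0,1]) is relatively compact in E, i.e., its closure is compact. -/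
open Set Filter Topology

/-! An ultrafilter on `f '' [a, b]` is the image of an ultrafilter on `[a, b]`, which converges to
some `t` and lives either on the left of `t` or on `[t, b]`; its image therefore converges to the
left limit at `t` or to `f t`. In a regular space a set on which every ultrafilter converges has
compact closure. -/

theorem isCompact_closure_of_forall_ultrafilter_le_nhds {X : Type*} [TopologicalSpace X]
    [RegularSpace X] {s : Set X} (h : ∀ 𝒰 : Ultrafilter X, s ∈ 𝒰 → ∃ x, (𝒰 : Filter X) ≤ 𝓝 x) :
    IsCompact (closure s) := by
  refine isCompact_iff_ultrafilter_le_nhds'.2 fun 𝒱 h𝒱 => ?_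
  -- `B` is proper because `𝒱` lives on `closure s`; closed neighbourhoods carry the limit of an
  -- ultrafilter finer than `B` back to `𝒱`.
  set B : Filter X := (𝒱 : Filter X).bind fun x => 𝓝[s] x
  have hB : B.NeBot := by
    refine ⟨fun hbot => ?_⟩
    have hbot' : {x | ∅ ∈ 𝓝[s] x} ∈ 𝒱 := mem_bind'.1 (empty_mem_iff_bot.2 hbot)
    obtain ⟨x, hx, hxbot⟩ := Ultrafilter.nonempty_of_mem (Filter.inter_mem h𝒱 hbot')
    exact (mem_closure_iff_nhdsWithin_neBot.1 hx).ne (empty_mem_iff_bot.1 hxbot)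
  obtain ⟨y, hy⟩ := h (Ultrafilter.of B)
    (Ultrafilter.of_le B (mem_bind'.2 (univ_mem' fun x => self_mem_nhdsWithin)))
  have h𝒱y : (𝒱 : Filter X) ≤ 𝓝 y := by
    refine (closed_nhds_basis y).ge_iff.2 fun C ⟨hCy, hC⟩ => ?_
    by_contra hC𝒱
    have hCB : Cᶜ ∈ B :=
      mem_bind'.2 (mem_of_superset (Ultrafilter.compl_mem_iff_notMem.2 hC𝒱)
        fun x hx => mem_nhdsWithin_of_mem_nhds (hC.isOpen_compl.mem_nhds hx))
    exact Ultrafilter.compl_notMem_iff.2 (hy hCy) (Ultrafilter.of_le B hCB)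
  exact ⟨y, isClosed_closure.mem_of_tendsto h𝒱y h𝒱, h𝒱y⟩

section Cadlag

variable {α E : Type*} [TopologicalSpace α] [LinearOrder α] [TopologicalSpace E]
  {f : α → E} {a b : α}

theorem exists_tendsto_ultrafilter_of_cadlag
    (hr : ∀ t ∈ Ico a b, Tendsto f (𝓝[>] t) (𝓝 (f t)))
    (hl : ∀ t ∈ Ioc a b, ∃ L, Tendsto f (𝓝[<] t) (𝓝 L))
    {𝒲 : Ultrafilter α} (hab : Icc a b ∈ 𝒲) {t : α} (ht : t ∈ Icc a b) (h𝒲t : ↑𝒲 ≤ 𝓝 t) :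
    ∃ L, Tendsto f 𝒲 (𝓝 L) := by
  rw [← nhdsLT_sup_nhdsGE, Ultrafilter.le_sup_iff] at h𝒲t
  rcases h𝒲t with hlt | hge
  · obtain ⟨s, ⟨has, -⟩, hst : s < t⟩ :=
      Ultrafilter.nonempty_of_mem (Filter.inter_mem hab (hlt self_mem_nhdsWithin))
    obtain ⟨L, hL⟩ := hl t ⟨has.trans_lt hst, ht.2⟩
    exact ⟨L, hL.mono_left hlt⟩
  refine ⟨f t, ?_⟩
  rcases ht.2.lt_or_eq with htb | rfl
  · exact (continuousWithinAt_Ioi_iff_Ici.1 (hr t ⟨ht.1, htb⟩)).tendsto.mono_left hge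
  -- at the right end the ultrafilter can only be `pure t`
  have : ({t} : Set α) ∈ 𝒲 :=
    mem_of_superset (Filter.inter_mem hab (hge self_mem_nhdsWithin))
      fun s ⟨hs, hts⟩ => le_antisymm hs.2 hts
  exact (tendsto_pure_nhds f t).mono_left (by rwa [← principal_singleton, le_principal_iff])

theorem isCompact_closure_image_Icc_of_cadlag [CompactIccSpace α] [RegularSpace E]
    (hr : ∀ t ∈ Ico a b, Tendsto f (𝓝[>] t) (𝓝 (f t)))
    (hl : ∀ t ∈ Ioc a b, ∃ L, Tendsto f (𝓝[<] t) (𝓝 L)) :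
    IsCompact (closure (f '' Icc a b)) := by
  refine isCompact_closure_of_forall_ultrafilter_le_nhds fun 𝒰 h𝒰 => ?_
  have hab := Ultrafilter.ofComapInfPrincipal_mem h𝒰
  obtain ⟨t, ht, h𝒲t⟩ := isCompact_Icc.ultrafilter_le_nhds' _ hab
  obtain ⟨L, hL⟩ := exists_tendsto_ultrafilter_of_cadlag hr hl hab ht h𝒲t
  rw [← Ultrafilter.ofComapInfPrincipal_eq_of_map h𝒰]
  exact ⟨L, hL⟩

end Cadlag

/-- If `E` is regular (T₃) and `f : [0,1] → E` is càdlàg (right-continuous on `[0,1)`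
with left limits on `(0,1]`), then the range `f([0,1])` is relatively compact. -/
theorem cadlag_range_relatively_compact {E : Type*} [TopologicalSpace E] [T3Space E]
    (f : ℝ → E)
    (hr : ∀ t ∈ Set.Ico (0:ℝ) 1, Tendsto f (𝓝[>] t) (𝓝 (f t)))
    (hl : ∀ t ∈ Set.Ioc (0:ℝ) 1, ∃ L, Tendsto f (𝓝[<] t) (𝓝 L)) :
    IsCompact (closure (f '' Set.Icc 0 1)) :=
  isCompact_closure_image_Icc_of_cadlag hr hl
end

section
/- Define f : [0,1] → ℝ by f(0) = f(1) = 0 and f(t) = (t + 1/n)/2 for t ∈ [1/(n+1), 1/n), n ≥ 1. Then f, regarded as a map into ℝ with the K-topology, is càdlàg: it is right-continuous on [0,1) and has left limits at every t ∈ (0,1] (with f(1/n −) = 1/n), yet the set {f(t) : t ∈ [0,1]} ∪ {f(t−) : t ∈ (0,1]} is not compact in the K-topology. -/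
/-!
On each piece `[1/(n+1), 1/n)` the function `f` is affine and takes its values in the gap
`(1/(n+1), 1/n)`, which misses `K`. A map that converges in the usual topology while avoiding `K`
also converges in the K-topology, so the one-sided limits of `f` are its usual ones; in particular
the left limit at `1/n` is `1/n`, and any choice of left limits puts all of `K` into the range set.
But `K` is closed in the K-topology, so a compact range set would make `K` compact there, hence
compact in the coarser usual topology, which fails because `1/(n+1) → 0 ∉ K`.
-/

open Set Filter Topology

/-- The set K = {1/n : n ∈ ℕ, n ≥ 1}. -/
def KSet : Set ℝ := {x | ∃ n : ℕ, 0 < n ∧ x = 1 / (n : ℝ)}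

/-- The K-topology (Smirnov deleted sequence topology) on ℝ: the topology whose open
sets are the sets `U \ H` with `U` open in the standard topology and `H ⊆ K`. -/
def Ktop : TopologicalSpace ℝ :=
  TopologicalSpace.generateFrom {s | ∃ U H : Set ℝ, IsOpen U ∧ H ⊆ KSet ∧ s = U \ H}

lemma Ktop_le : Ktop ≤ (inferInstance : TopologicalSpace ℝ) := fun U hU =>
  TopologicalSpace.isOpen_generateFrom_of_mem ⟨U, ∅, hU, empty_subset _, sdiff_empty.symm⟩

instance t2Space_Ktop : @T2Space ℝ Ktop := t2Space_antitone Ktop_le inferInstance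

lemma isClosed_KSet_Ktop : IsClosed[Ktop] KSet :=
  @IsClosed.mk ℝ Ktop _ <| TopologicalSpace.isOpen_generateFrom_of_mem
    ⟨univ, KSet, isOpen_univ, subset_rfl, compl_eq_univ_sdiff _⟩

lemma tendsto_nhds_Ktop {α : Type*} {l : Filter α} {F : α → ℝ} {x : ℝ}
    (h : Tendsto F l (𝓝 x)) (hK : ∀ᶠ a in l, F a ∉ KSet) : Tendsto F l (@nhds ℝ Ktop x) := by
  rw [Ktop, TopologicalSpace.nhds_generateFrom]
  simp only [tendsto_iInf, tendsto_principal]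
  rintro _ ⟨hx, U, H, hU, hH, rfl⟩
  filter_upwards [h (hU.mem_nhds hx.1), hK] with a haU haK using ⟨haU, fun haH => haK (hH haH)⟩

lemma zero_mem_closure_KSet : (0 : ℝ) ∈ closure KSet :=
  mem_closure_of_tendsto tendsto_one_div_add_atTop_nhds_zero_nat
    (Eventually.of_forall fun n => ⟨n + 1, n.succ_pos, by push_cast; rfl⟩)

lemma zero_notMem_KSet : (0 : ℝ) ∉ KSet := by
  rintro ⟨n, hn, h⟩
  exact (one_div_pos.mpr (Nat.cast_pos.mpr hn)).ne h

lemma not_isCompact_Ktop_of_KSet_subset {A : Set ℝ} (hA : KSet ⊆ A) : ¬ @IsCompact ℝ Ktop A := by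
  intro hA_compact
  have hK : IsCompact KSet := by
    simpa using @IsCompact.image ℝ ℝ Ktop _ _ _
      (@IsCompact.of_isClosed_subset ℝ Ktop _ _ hA_compact isClosed_KSet_Ktop hA)
      (continuous_id_of_le Ktop_le)
  exact zero_notMem_KSet (hK.isClosed.closure_subset zero_mem_closure_KSet)

lemma notMem_KSet_of_mem_Ioo {n : ℕ} {x : ℝ} (hn : 0 < n)
    (hx : x ∈ Ioo (1 / ((n : ℝ) + 1)) (1 / (n : ℝ))) : x ∉ KSet := by
  rintro ⟨m, hm, rfl⟩
  have hn' : (0 : ℝ) < n := Nat.cast_pos.mpr hn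
  have hm' : (0 : ℝ) < m := Nat.cast_pos.mpr hm
  have h₁ : (n : ℝ) < m := (one_div_lt_one_div hm' hn').mp hx.2
  have h₂ : (m : ℝ) < n + 1 := (one_div_lt_one_div (by positivity) hm').mp hx.1
  norm_cast at h₁ h₂
  omega

lemma exists_mem_Ico_one_div {t : ℝ} (ht : t ∈ Ioo 0 1) :
    ∃ n : ℕ, 0 < n ∧ t ∈ Ico (1 / ((n : ℝ) + 1)) (1 / (n : ℝ)) := by
  obtain ⟨ht₀, ht₁⟩ := ht
  have h_one_lt : 1 < ⌈1 / t⌉₊ :=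
    Nat.lt_ceil.mpr (by rw [Nat.cast_one, lt_one_div one_pos ht₀]; simpa)
  obtain ⟨n, hn⟩ : ∃ n, ⌈1 / t⌉₊ = n + 1 := Nat.exists_eq_add_one.mpr (by omega)
  have hn₀ : 0 < n := by omega
  refine ⟨n, hn₀, (one_div_le (by positivity) ht₀).mpr ?_, (lt_one_div ht₀ (by positivity)).mpr ?_⟩
  · exact_mod_cast hn ▸ Nat.le_ceil (1 / t)
  · exact Nat.lt_ceil.mp (by omega)

lemma exists_mem_Ioc_one_div {t : ℝ} (ht : t ∈ Ioc 0 1) :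
    ∃ n : ℕ, 0 < n ∧ t ∈ Ioc (1 / ((n : ℝ) + 1)) (1 / (n : ℝ)) := by
  obtain ⟨ht₀, ht₁⟩ := ht
  have hn₀ : 0 < ⌊1 / t⌋₊ := Nat.floor_pos.mpr (by rw [le_one_div one_pos ht₀]; simpa)
  refine ⟨_, hn₀, (one_div_lt (by positivity) ht₀).mpr (Nat.lt_floor_add_one _),
    (le_one_div ht₀ (by positivity)).mpr (Nat.floor_le (by positivity))⟩

lemma average_mem_Ioo_of_mem_Ico {n : ℕ} {s : ℝ} (hn : 0 < n)
    (hs : s ∈ Ico (1 / ((n : ℝ) + 1)) (1 / (n : ℝ))) :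
    (s + 1 / (n : ℝ)) / 2 ∈ Ioo (1 / ((n : ℝ) + 1)) (1 / (n : ℝ)) := by
  have : 1 / ((n : ℝ) + 1) < 1 / n := one_div_lt_one_div_of_lt (Nat.cast_pos.mpr hn) (by linarith)
  constructor <;> linarith [hs.1, hs.2]

section PiecewiseAffine

variable {f : ℝ → ℝ}
  (hfn : ∀ n : ℕ, 0 < n → ∀ t ∈ Ico (1 / ((n : ℝ) + 1)) (1 / (n : ℝ)), f t = (t + 1 / (n : ℝ)) / 2)
include hfn

lemma tendsto_Ktop_of_Ico_mem {n : ℕ} (hn : 0 < n) {l : Filter ℝ} {t : ℝ} (hl : l ≤ 𝓝 t)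
    (hI : Ico (1 / ((n : ℝ) + 1)) (1 / (n : ℝ)) ∈ l) :
    Tendsto f l (@nhds ℝ Ktop ((t + 1 / (n : ℝ)) / 2)) := by
  refine tendsto_nhds_Ktop ?_ ?_
  · refine Tendsto.congr' (eventuallyEq_of_mem hI fun s hs => (hfn n hn s hs).symm) ?_
    exact (((continuous_add_const _).div_const 2).tendsto t).mono_left hl
  · filter_upwards [hI] with s hs
    rw [hfn n hn s hs]
    exact notMem_KSet_of_mem_Ioo hn (average_mem_Ioo_of_mem_Ico hn hs)

lemma apply_notMem_KSet {t : ℝ} (ht : t ∈ Ioo 0 1) : f t ∉ KSet := by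
  obtain ⟨n, hn, htn⟩ := exists_mem_Ico_one_div ht
  rw [hfn n hn t htn]
  exact notMem_KSet_of_mem_Ioo hn (average_mem_Ioo_of_mem_Ico hn htn)

lemma apply_mem_Icc {t : ℝ} (ht : t ∈ Ioo 0 1) : f t ∈ Icc t (2 * t) := by
  obtain ⟨n, hn, htn⟩ := exists_mem_Ico_one_div ht
  have hn' : (1 : ℝ) ≤ n := Nat.one_le_cast.mpr hn
  -- `1/n ≤ 2/(n+1) ≤ 2t` because `n + 1 ≤ 2n`
  have h : 1 / (n : ℝ) ≤ 2 * (1 / ((n : ℝ) + 1)) := by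
    rw [mul_one_div, div_le_div_iff₀ (by positivity) (by positivity)]
    linarith
  rw [hfn n hn t htn]
  constructor <;> linarith [htn.1, htn.2]

lemma tendsto_nhdsGT_zero_Ktop : Tendsto f (𝓝[>] 0) (@nhds ℝ Ktop 0) := by
  have hI : Ioo (0 : ℝ) 1 ∈ 𝓝[>] 0 := Ioo_mem_nhdsGT one_pos
  refine tendsto_nhds_Ktop ?_ (mem_of_superset hI fun t ht => apply_notMem_KSet hfn ht)
  have h2 : Tendsto (fun t : ℝ => 2 * t) (𝓝[>] 0) (𝓝 0) := by
    simpa using ((continuous_const_mul (2 : ℝ)).tendsto 0).mono_left nhdsWithin_le_nhds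
  exact tendsto_of_tendsto_of_tendsto_of_le_of_le' nhdsWithin_le_nhds h2
    (mem_of_superset hI fun t ht => (apply_mem_Icc hfn ht).1)
    (mem_of_superset hI fun t ht => (apply_mem_Icc hfn ht).2)

lemma tendsto_nhdsGT_Ktop (hf0 : f 0 = 0) {t : ℝ} (ht : t ∈ Ico 0 1) :
    Tendsto f (𝓝[>] t) (@nhds ℝ Ktop (f t)) := by
  rcases ht.1.eq_or_lt with rfl | ht₀
  · rw [hf0]
    exact tendsto_nhdsGT_zero_Ktop hfn
  obtain ⟨n, hn, htn⟩ := exists_mem_Ico_one_div ⟨ht₀, ht.2⟩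
  rw [hfn n hn t htn]
  exact tendsto_Ktop_of_Ico_mem hfn hn nhdsWithin_le_nhds (Ico_mem_nhdsGT_of_mem htn)

lemma tendsto_nhdsLT_Ktop {n : ℕ} (hn : 0 < n) {t : ℝ}
    (ht : t ∈ Ioc (1 / ((n : ℝ) + 1)) (1 / (n : ℝ))) :
    Tendsto f (𝓝[<] t) (@nhds ℝ Ktop ((t + 1 / (n : ℝ)) / 2)) :=
  tendsto_Ktop_of_Ico_mem hfn hn nhdsWithin_le_nhds (Ico_mem_nhdsLT_of_mem ht)

end PiecewiseAffine

theorem cadlag_into_Ktop_range_not_compact_general (f : ℝ → ℝ)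
    (hf0 : f 0 = 0)
    (hfn : ∀ n : ℕ, 0 < n → ∀ t ∈ Set.Ico (1 / ((n : ℝ) + 1)) (1 / (n : ℝ)),
      f t = (t + 1 / (n : ℝ)) / 2) :
    (∀ t ∈ Set.Ico (0:ℝ) 1, Tendsto f (𝓝[>] t) (@nhds ℝ Ktop (f t))) ∧
    (∀ t ∈ Set.Ioc (0:ℝ) 1, ∃ L, Tendsto f (𝓝[<] t) (@nhds ℝ Ktop L)) ∧
    (∀ n : ℕ, 0 < n → Tendsto f (𝓝[<] (1 / (n : ℝ))) (@nhds ℝ Ktop (1 / (n : ℝ)))) ∧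
    (∀ g : ℝ → ℝ, (∀ t ∈ Set.Ioc (0:ℝ) 1, Tendsto f (𝓝[<] t) (@nhds ℝ Ktop (g t))) →
      ¬ @IsCompact ℝ Ktop (f '' Set.Icc 0 1 ∪ g '' Set.Ioc 0 1)) := by
  have left_lim_one_div : ∀ n : ℕ, 0 < n →
      Tendsto f (𝓝[<] (1 / (n : ℝ))) (@nhds ℝ Ktop (1 / (n : ℝ))) := fun n hn => by
    simpa only [add_self_div_two] using tendsto_nhdsLT_Ktop hfn hn
      ⟨one_div_lt_one_div_of_lt (Nat.cast_pos.mpr hn) (lt_add_one _), le_rfl⟩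
  refine ⟨fun t ht => tendsto_nhdsGT_Ktop hfn hf0 ht, fun t ht => ?_, left_lim_one_div,
    fun g hg => not_isCompact_Ktop_of_KSet_subset ?_⟩
  · obtain ⟨n, hn, htn⟩ := exists_mem_Ioc_one_div ht
    exact ⟨_, tendsto_nhdsLT_Ktop hfn hn htn⟩
  · rintro _ ⟨n, hn, rfl⟩
    have hmem : 1 / (n : ℝ) ∈ Ioc 0 1 :=
      ⟨by positivity, (div_le_one (Nat.cast_pos.mpr hn)).mpr (Nat.one_le_cast.mpr hn)⟩
    exact Or.inr ⟨_, hmem,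
      @tendsto_nhds_unique ℝ ℝ Ktop _ _ _ _ _ _ (hg _ hmem) (left_lim_one_div n hn)⟩

/-- The function `f` with `f 0 = f 1 = 0` and `f t = (t + 1/n)/2` on `[1/(n+1), 1/n)`,
viewed as a map into ℝ with the K-topology, is càdlàg (right-continuous on `[0,1)` with
left limits on `(0,1]`, the left limit at `1/n` being `1/n`), yet the set
`{f t : t ∈ [0,1]} ∪ {f(t−) : t ∈ (0,1]}` is not compact in the K-topology. -/
theorem cadlag_into_Ktop_range_not_compact (f : ℝ → ℝ)
    (hf0 : f 0 = 0) (hf1 : f 1 = 0)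
    (hfn : ∀ n : ℕ, 0 < n → ∀ t ∈ Set.Ico (1 / ((n : ℝ) + 1)) (1 / (n : ℝ)),
      f t = (t + 1 / (n : ℝ)) / 2) :
    (∀ t ∈ Set.Ico (0:ℝ) 1, Tendsto f (𝓝[>] t) (@nhds ℝ Ktop (f t))) ∧
    (∀ t ∈ Set.Ioc (0:ℝ) 1, ∃ L, Tendsto f (𝓝[<] t) (@nhds ℝ Ktop L)) ∧
    (∀ n : ℕ, 0 < n → Tendsto f (𝓝[<] (1 / (n : ℝ))) (@nhds ℝ Ktop (1 / (n : ℝ)))) ∧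
    (∀ g : ℝ → ℝ, (∀ t ∈ Set.Ioc (0:ℝ) 1, Tendsto f (𝓝[<] t) (@nhds ℝ Ktop (g t))) →
      ¬ @IsCompact ℝ Ktop (f '' Set.Icc 0 1 ∪ g '' Set.Ioc 0 1)) :=
  cadlag_into_Ktop_range_not_compact_general f hf0 hfn
end

section
/- Let E be a set with two families of pseudometrics {d_i}_{i∈I} and {ζ_j}_{j∈J}, each separating points and directed under pointwise maxima, generating topologies τ and σ respectively with τ ⊆ σ (τ coarser). Then every σ-càdlàg function [0,1] → E is τ-càdlàg, and on the space D([0,1],E,σ) of σ-càdlàg functions the topology generated by the Skorohod pseudometrics {ζ̃_j}_{j∈J} is finer than the topology generated by the Skorohod pseudometrics {d̃_i}_{i∈I}. -/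
/-!
Since `τ ⊆ σ`, every `d i`-ball is a `σ`-neighbourhood of its centre, and by directedness every
`σ`-neighbourhood contains a `ζ j`-ball. The range of a càdlàg path is covered by finitely many
such balls (compactness of `[0,1]` plus one-sided limits), so along a fixed path `y₀` a single
`ζ j` and radius `δ` work uniformly: `ζ j (y₀ t) b < δ → d i (y₀ t) b < ε`. Hence
`ζ̃ j (y₀, y) < δ` forces `d̃ i (y₀, y) ≤ ε` and `d̃ i (y, y₀) ≤ ε` (using the inverse time change),
and the triangle inequality for `d̃ i` makes `y ↦ d̃ i (x, y)` continuous for the `ζ̃`-topology.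
-/

open Set Filter Topology

/-- A pseudometric on a set `E`: vanishes on the diagonal, symmetric, triangle
inequality (nonnegativity follows). -/
def IsPseudometric {E : Type*} (d : E → E → ℝ) : Prop :=
  (∀ a, d a a = 0) ∧ (∀ a b, d a b = d b a) ∧ (∀ a b c, d a c ≤ d a b + d b c)

/-- The topology on `E` generated by a family of pseudometrics: the coarsest topology
making every map `x ↦ d i a x` continuous. -/
def pseudoTop {E : Type*} {ι : Sort*} (d : ι → E → E → ℝ) : TopologicalSpace E :=
  ⨅ (i : ι) (a : E), TopologicalSpace.induced (fun x => d i a x) inferInstance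

/-- A function `f : ℝ → E` is càdlàg on `[0,1]`: right-continuous at every `t ∈ [0,1)`
and with left limits at every `t ∈ (0,1]`. -/
def Cadlag {E : Type*} [TopologicalSpace E] (f : ℝ → E) : Prop :=
  (∀ t ∈ Set.Ico (0:ℝ) 1, Filter.Tendsto f (𝓝[>] t) (𝓝 (f t))) ∧
  (∀ t ∈ Set.Ioc (0:ℝ) 1, ∃ L, Filter.Tendsto f (𝓝[<] t) (𝓝 L))

/-- The set Λ of strictly increasing continuous maps of `[0,1]` onto itself. -/
def SkLambda : Set (ℝ → ℝ) :=
  {l | ContinuousOn l (Set.Icc 0 1) ∧ StrictMonoOn l (Set.Icc 0 1) ∧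
    l '' Set.Icc 0 1 = Set.Icc 0 1}

/-- The Skorohod pseudometric associated to a pseudometric `d` on `E`:
`d̃(x,y) = inf_{λ∈Λ} max( sup_t |λ t − t|, sup_t d (x (λ t)) (y t) )`. -/
noncomputable def skDist {E : Type*} (d : E → E → ℝ) (x y : ℝ → E) : ℝ :=
  sInf {r | ∃ l ∈ SkLambda,
    r = max (⨆ t : Set.Icc (0:ℝ) 1, |l t - (t : ℝ)|)
            (⨆ t : Set.Icc (0:ℝ) 1, d (x (l t)) (y t))}

/-- The Skorohod topology on a set `D` of functions `[0,1] → E` generated by the Skorohod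
pseudometrics associated to a family of pseudometrics on `E`. -/
noncomputable def skTop {E : Type*} {κ : Type*} (D : Set (ℝ → E)) (fam : κ → E → E → ℝ) :
    TopologicalSpace D :=
  ⨅ (k : κ) (x : D), TopologicalSpace.induced
    (fun y : D => skDist (fam k) (x : ℝ → E) (y : ℝ → E)) inferInstance

namespace IsPseudometric

variable {X : Type*} {e : X → X → ℝ}

lemma symm (he : IsPseudometric e) (a b : X) : e a b = e b a := he.2.1 a b

lemma triangle (he : IsPseudometric e) (a b c : X) : e a c ≤ e a b + e b c := he.2.2 a b c

lemma nonneg (he : IsPseudometric e) (a b : X) : 0 ≤ e a b := by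
  linarith [he.triangle a b a, he.symm b a, he.1 a]

lemma abs_sub_le (he : IsPseudometric e) (a p x : X) : |e a x - e a p| ≤ e p x := by
  rw [abs_sub_le_iff]
  constructor <;> linarith [he.triangle a p x, he.triangle a x p, he.symm p x]

lemma setOf_lt_mem_nhds [TopologicalSpace X] (he : IsPseudometric e) {p : X}
    (hp : Continuous (e p)) {ε : ℝ} (hε : 0 < ε) : {x | e p x < ε} ∈ 𝓝 p :=
  (isOpen_lt hp continuous_const).mem_nhds (by simpa [he.1] using hε)

end IsPseudometric

lemma directed_of_forall_max_le {E J : Type*} {ζ : J → E → E → ℝ}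
    (h : ∀ j j', ∃ k, ∀ a b, max (ζ j a b) (ζ j' a b) ≤ ζ k a b) : Directed (· ≤ ·) ζ :=
  fun j j' => (h j j').imp fun _ hk =>
    ⟨fun a b => (le_max_left _ _).trans (hk a b), fun a b => (le_max_right _ _).trans (hk a b)⟩

lemma continuous_pseudoTop {E ι : Type*} (ζ : ι → E → E → ℝ) (j : ι) (a : E) :
    Continuous[pseudoTop ζ, _] (ζ j a) :=
  continuous_iInf_dom (continuous_iInf_dom continuous_induced_dom)

lemma exists_ball_subset_of_mem_nhds_pseudoTop {E J : Type*} [Nonempty J]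
    {ζ : J → E → E → ℝ} (hζ : ∀ j, IsPseudometric (ζ j)) (hζdir : Directed (· ≤ ·) ζ)
    {p : E} {U : Set E} (hU : U ∈ @nhds E (pseudoTop ζ) p) :
    ∃ j, ∃ δ > 0, {x | ζ j p x < δ} ⊆ U := by
  let ball : J × Ioi (0 : ℝ) → Set E := fun jδ => {x | ζ jδ.1 p x < jδ.2}
  have hdir : Directed (· ≥ ·) ball := by
    rintro ⟨j, δ, hδ⟩ ⟨j', δ', hδ'⟩
    obtain ⟨k, hjk, hj'k⟩ := hζdir j j'
    exact ⟨⟨k, min δ δ', mem_Ioi.2 (lt_min hδ hδ')⟩,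
      fun x hx => (hjk p x).trans_lt (hx.trans_le (min_le_left _ _)),
      fun x hx => (hj'k p x).trans_lt (hx.trans_le (min_le_right _ _))⟩
  have hbasis := hasBasis_iInf_principal hdir
  have hle : ⨅ jδ, 𝓟 (ball jδ) ≤ @nhds E (pseudoTop ζ) p := by
    unfold pseudoTop
    simp only [nhds_iInf, nhds_induced]
    refine le_iInf₂ fun j a => tendsto_iff_comap.1 <|
      (hbasis.tendsto_iff Metric.nhds_basis_ball).2 fun ε hε => ⟨⟨j, ε, hε⟩, trivial, ?_⟩
    intro x hx
    exact ((hζ j).abs_sub_le a p x).trans_lt hx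
  obtain ⟨⟨j, δ, hδ⟩, -, hsub⟩ := hbasis.mem_iff.1 (hle hU)
  exact ⟨j, δ, hδ, hsub⟩

-- Without this bound the suprema in `skDist` take the junk value `0`.
def PairBounded {E : Type*} (e : E → E → ℝ) (x y : ℝ → E) : Prop :=
  ∃ C, ∀ s ∈ Icc (0 : ℝ) 1, ∀ t ∈ Icc (0 : ℝ) 1, e (x s) (y t) ≤ C

namespace Cadlag

variable {X : Type*}

lemma mono {t₁ t₂ : TopologicalSpace X} (h : t₁ ≤ t₂) {f : ℝ → X} (hf : @Cadlag X t₁ f) :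
    @Cadlag X t₂ f :=
  ⟨fun t ht => (hf.1 t ht).mono_right (nhds_mono h),
    fun t ht => (hf.2 t ht).imp fun _ hL => hL.mono_right (nhds_mono h)⟩

variable [TopologicalSpace X]

lemma exists_finset_cover {f : ℝ → X} (hf : Cadlag f) {U : X → Set X}
    (hU : ∀ p, U p ∈ 𝓝 p) : ∃ F : Finset X, ∀ t ∈ Icc (0 : ℝ) 1, ∃ p ∈ F, f t ∈ U p := by
  classical
  -- near `t`, the values of `f` lie in `U L ∪ U (f t)`, where `L` is the left limit at `t`
  have hloc : ∀ t ∈ Icc (0 : ℝ) 1, ∃ L,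
      {s | s ∈ Icc (0 : ℝ) 1 → f s ∈ U L ∪ U (f t)} ∈ 𝓝 t := by
    intro t ht
    obtain ⟨L, hL⟩ : ∃ L, {s | s ∈ Icc (0 : ℝ) 1 → f s ∈ U L} ∈ 𝓝[<] t := by
      rcases eq_or_lt_of_le ht.1 with rfl | ht₀
      · exact ⟨f 0, mem_of_superset self_mem_nhdsWithin fun s hs hs' => absurd hs'.1 (not_le.2 hs)⟩
      · obtain ⟨L, hL⟩ := hf.2 t ⟨ht₀, ht.2⟩
        exact ⟨L, mem_of_superset (hL (hU L)) fun s hs _ => hs⟩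
    have hR : {s | s ∈ Icc (0 : ℝ) 1 → f s ∈ U (f t)} ∈ 𝓝[≥] t := by
      rcases eq_or_lt_of_le ht.2 with rfl | ht₁
      · refine mem_of_superset self_mem_nhdsWithin fun s hs hs' => ?_
        rw [le_antisymm hs'.2 hs]
        exact mem_of_mem_nhds (hU _)
      · have hcont : ContinuousWithinAt f (Ici t) t :=
          continuousWithinAt_Ioi_iff_Ici.1 (hf.1 t ⟨ht.1, ht₁⟩)
        exact mem_of_superset (hcont (hU _)) fun s hs _ => hs
    refine ⟨L, ?_⟩
    rw [← nhdsLT_sup_nhdsGE]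
    exact ⟨mem_of_superset hL fun s hs hs' => Or.inl (hs hs'),
      mem_of_superset hR fun s hs hs' => Or.inr (hs hs')⟩
  have : Nonempty X := ⟨f 0⟩
  choose! L hL using hloc
  obtain ⟨T, -, hcover⟩ := isCompact_Icc.elim_nhds_subcover _ hL
  refine ⟨T.image L ∪ T.image f, fun s hs => ?_⟩
  obtain ⟨t, htT, hst⟩ := mem_iUnion₂.1 (hcover hs)
  rcases hst hs with h | h
  · exact ⟨L t, Finset.mem_union_left _ (Finset.mem_image_of_mem L htT), h⟩
  · exact ⟨f t, Finset.mem_union_right _ (Finset.mem_image_of_mem f htT), h⟩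

variable {e : X → X → ℝ}

lemma exists_bound (he : IsPseudometric e) (he_cont : ∀ p, Continuous (e p)) {f : ℝ → X}
    (hf : Cadlag f) (a : X) : ∃ C, ∀ t ∈ Icc (0 : ℝ) 1, e a (f t) ≤ C := by
  obtain ⟨F, hF⟩ := hf.exists_finset_cover fun p => he.setOf_lt_mem_nhds (he_cont p) one_pos
  refine ⟨∑ p ∈ F, e a p + 1, fun t ht => ?_⟩
  obtain ⟨p, hpF, hpt⟩ := hF t ht
  have hap : e a p ≤ ∑ q ∈ F, e a q := Finset.single_le_sum (fun q _ => he.nonneg a q) hpF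
  linarith [he.triangle a p (f t), hpt.out]

lemma pairBounded (he : IsPseudometric e) (he_cont : ∀ p, Continuous (e p)) {f g : ℝ → X}
    (hf : Cadlag f) (hg : Cadlag g) : PairBounded e f g := by
  obtain ⟨C₁, hC₁⟩ := hf.exists_bound he he_cont (f 0)
  obtain ⟨C₂, hC₂⟩ := hg.exists_bound he he_cont (f 0)
  refine ⟨C₁ + C₂, fun s hs t ht => ?_⟩
  linarith [he.triangle (f s) (f 0) (g t), he.symm (f s) (f 0), hC₁ s hs, hC₂ t ht]

end Cadlag

lemma Cadlag.exists_uniform_ball {E J : Type*} [Nonempty J] {ζ : J → E → E → ℝ}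
    (hζ : ∀ j, IsPseudometric (ζ j)) (hζdir : Directed (· ≤ ·) ζ) {e : E → E → ℝ}
    (he : IsPseudometric e) (he_cont : ∀ p, Continuous[pseudoTop ζ, _] (e p)) {f : ℝ → E}
    (hf : @Cadlag E (pseudoTop ζ) f) {ε : ℝ} (hε : 0 < ε) :
    ∃ j, ∃ δ > 0, ∀ t ∈ Icc (0 : ℝ) 1, ∀ b, ζ j (f t) b < δ → e (f t) b < ε := by
  classical
  let _ : TopologicalSpace E := pseudoTop ζ
  choose j δ hδ hball using fun p =>
    exists_ball_subset_of_mem_nhds_pseudoTop hζ hζdir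
      (he.setOf_lt_mem_nhds (he_cont p) (half_pos hε))
  obtain ⟨F, hF⟩ := hf.exists_finset_cover fun p =>
    (hζ (j p)).setOf_lt_mem_nhds (continuous_pseudoTop ζ (j p) p) (half_pos (hδ p))
  have hFne : F.Nonempty := let ⟨p, hp, _⟩ := hF 0 (left_mem_Icc.2 zero_le_one); ⟨p, hp⟩
  obtain ⟨k, hk⟩ := hζdir.finset_le (F.image j)
  refine ⟨k, F.inf' hFne (fun p => δ p / 2), (Finset.lt_inf'_iff _).2 fun p _ => half_pos (hδ p),
    fun t ht b hb => ?_⟩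
  obtain ⟨p, hpF, hpt⟩ := hF t ht
  have hpb : ζ (j p) p b < δ p := by
    have hjk := hk (j p) (Finset.mem_image_of_mem j hpF) (f t) b
    have hinf := Finset.inf'_le (fun p => δ p / 2) hpF
    linarith [(hζ (j p)).triangle p (f t) b, hpt.out]
  have hpt' : e p (f t) < ε / 2 := hball p (lt_trans hpt (half_lt_self (hδ p)))
  linarith [he.triangle (f t) p b, he.symm (f t) p, (hball p hpb).out]

lemma StrictMonoOn.continuousOn_of_ordConnected_image {α β : Type*} [LinearOrder α]
    [TopologicalSpace α] [OrderTopology α] [LinearOrder β] [TopologicalSpace β] [OrderTopology β]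
    {f : α → β} {s : Set α} [OrdConnected s] (hf : StrictMonoOn f s) (hs : OrdConnected (f '' s)) :
    ContinuousOn f s := by
  rw [continuousOn_iff_continuous_domRestrict]
  exact continuous_subtype_val.comp (hf.orderIso f s).continuous

namespace SkLambda

lemma id_mem : id ∈ SkLambda :=
  ⟨continuousOn_id, strictMonoOn_id, image_id _⟩

lemma mapsTo {l : ℝ → ℝ} (hl : l ∈ SkLambda) : MapsTo l (Icc 0 1) (Icc 0 1) :=
  fun _ ht => hl.2.2 ▸ mem_image_of_mem l ht

lemma comp_mem {l₁ l₂ : ℝ → ℝ} (h₁ : l₁ ∈ SkLambda) (h₂ : l₂ ∈ SkLambda) :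
    l₁ ∘ l₂ ∈ SkLambda :=
  ⟨h₁.1.comp h₂.1 (mapsTo h₂), h₁.2.1.comp h₂.2.1 (mapsTo h₂), by rw [image_comp, h₂.2.2, h₁.2.2]⟩

lemma mem_of_strictMonoOn {l : ℝ → ℝ} (hm : StrictMonoOn l (Icc 0 1))
    (him : l '' Icc 0 1 = Icc 0 1) : l ∈ SkLambda :=
  ⟨hm.continuousOn_of_ordConnected_image (by rw [him]; exact ordConnected_Icc), hm, him⟩

lemma exists_rightInverse {l : ℝ → ℝ} (hl : l ∈ SkLambda) :
    ∃ g ∈ SkLambda, ∀ t ∈ Icc (0 : ℝ) 1, l (g t) = t := by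
  have hsurj : SurjOn l (Icc 0 1) (Icc 0 1) := hl.2.2.symm.subset
  have hinv : InvOn (Function.invFunOn l (Icc 0 1)) l (Icc 0 1) (Icc 0 1) :=
    ⟨fun t ht => hl.2.1.injOn.leftInvOn_invFunOn ht, hsurj.rightInvOn_invFunOn⟩
  have hmaps : MapsTo (Function.invFunOn l (Icc 0 1)) (Icc 0 1) (Icc 0 1) :=
    hsurj.mapsTo_invFunOn
  refine ⟨Function.invFunOn l (Icc 0 1), mem_of_strictMonoOn (fun s hs t ht hst => ?_)
    (hinv.symm.bijOn hmaps (mapsTo hl)).image_eq, fun t ht => hinv.2 ht⟩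
  by_contra! h
  have := hl.2.1.monotoneOn (hmaps ht) (hmaps hs) h
  rw [hinv.2 hs, hinv.2 ht] at this
  exact this.not_gt hst

end SkLambda

section skDist

variable {E : Type*} {e : E → E → ℝ}

lemma skDist_nonneg (x y : ℝ → E) : 0 ≤ skDist e x y :=
  Real.sInf_nonneg fun _ ⟨_, _, hr⟩ =>
    hr ▸ (Real.iSup_nonneg fun _ => abs_nonneg _).trans (le_max_left _ _)

lemma skDist_le_of_forall {x y : ℝ → E} {l : ℝ → ℝ} (hl : l ∈ SkLambda) {c : ℝ}
    (h : ∀ t ∈ Icc (0 : ℝ) 1, |l t - t| ≤ c ∧ e (x (l t)) (y t) ≤ c) : skDist e x y ≤ c := by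
  have : Nonempty (Icc (0 : ℝ) 1) := ⟨⟨0, left_mem_Icc.2 zero_le_one⟩⟩
  have hbdd : BddBelow {r | ∃ l ∈ SkLambda, r = max (⨆ t : Icc (0 : ℝ) 1, |l t - (t : ℝ)|)
      (⨆ t : Icc (0 : ℝ) 1, e (x (l t)) (y t))} :=
    ⟨0, by
      rintro _ ⟨_, _, rfl⟩
      exact (Real.iSup_nonneg fun _ => abs_nonneg _).trans (le_max_left _ _)⟩
  exact (csInf_le hbdd ⟨l, hl, rfl⟩).trans
    (max_le (ciSup_le fun t => (h t t.2).1) (ciSup_le fun t => (h t t.2).2))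

lemma skDist_self (he : IsPseudometric e) (x : ℝ → E) : skDist e x x = 0 :=
  le_antisymm (skDist_le_of_forall SkLambda.id_mem fun t _ => by simp [he.1]) (skDist_nonneg x x)

lemma exists_forall_lt_of_skDist_lt {x y : ℝ → E} (hxy : PairBounded e x y) {c : ℝ}
    (h : skDist e x y < c) :
    ∃ l ∈ SkLambda, ∀ t ∈ Icc (0 : ℝ) 1, |l t - t| < c ∧ e (x (l t)) (y t) < c := by
  obtain ⟨_, ⟨l, hl, rfl⟩, hlt⟩ := exists_lt_of_csInf_lt (by exact ⟨_, id, SkLambda.id_mem, rfl⟩) h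
  obtain ⟨C, hC⟩ := hxy
  have hbdd₁ : BddAbove (range fun t : Icc (0 : ℝ) 1 => |l t - (t : ℝ)|) :=
    ⟨1, forall_mem_range.2 fun t =>
      abs_sub_le_of_nonneg_of_le (SkLambda.mapsTo hl t.2).1 (SkLambda.mapsTo hl t.2).2 t.2.1 t.2.2⟩
  have hbdd₂ : BddAbove (range fun t : Icc (0 : ℝ) 1 => e (x (l t)) (y t)) :=
    ⟨C, forall_mem_range.2 fun t => hC _ (SkLambda.mapsTo hl t.2) _ t.2⟩
  exact ⟨l, hl, fun t ht =>
    ⟨(le_ciSup hbdd₁ ⟨t, ht⟩).trans_lt ((le_max_left _ _).trans_lt hlt),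
      (le_ciSup hbdd₂ ⟨t, ht⟩).trans_lt ((le_max_right _ _).trans_lt hlt)⟩⟩

lemma skDist_swap_le_of_forall (he : IsPseudometric e) {x y : ℝ → E} {l : ℝ → ℝ}
    (hl : l ∈ SkLambda) {c : ℝ} (h : ∀ t ∈ Icc (0 : ℝ) 1, |l t - t| ≤ c ∧ e (x (l t)) (y t) ≤ c) :
    skDist e y x ≤ c := by
  obtain ⟨g, hg, hlg⟩ := SkLambda.exists_rightInverse hl
  refine skDist_le_of_forall hg fun t ht => ?_
  obtain ⟨h₁, h₂⟩ := h (g t) (SkLambda.mapsTo hg ht)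
  rw [hlg t ht] at h₁ h₂
  exact ⟨by rwa [abs_sub_comm], by rwa [he.symm]⟩

lemma skDist_triangle (he : IsPseudometric e) {u w v : ℝ → E} (huw : PairBounded e u w)
    (hwv : PairBounded e w v) : skDist e u v ≤ skDist e u w + skDist e w v := by
  refine le_of_forall_pos_le_add fun ε hε => ?_
  obtain ⟨l₁, hl₁, h₁⟩ := exists_forall_lt_of_skDist_lt huw (lt_add_of_pos_right _ (half_pos hε))
  obtain ⟨l₂, hl₂, h₂⟩ := exists_forall_lt_of_skDist_lt hwv (lt_add_of_pos_right _ (half_pos hε))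
  refine skDist_le_of_forall (SkLambda.comp_mem hl₁ hl₂) fun t ht => ?_
  obtain ⟨h₁l, h₁e⟩ := h₁ (l₂ t) (SkLambda.mapsTo hl₂ ht)
  obtain ⟨h₂l, h₂e⟩ := h₂ t ht
  simp only [Function.comp_apply]
  constructor
  · linarith [abs_sub_le (l₁ (l₂ t)) (l₂ t) t]
  · linarith [he.triangle (u (l₁ (l₂ t))) (w (l₂ t)) (v t)]

lemma skDist_le_of_skDist_lt {ζ : E → E → ℝ} (he : IsPseudometric e) {x y : ℝ → E}
    (hxy : PairBounded ζ x y) {δ ε : ℝ} (hδε : δ ≤ ε)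
    (hunif : ∀ t ∈ Icc (0 : ℝ) 1, ∀ b, ζ (x t) b < δ → e (x t) b < ε)
    (h : skDist ζ x y < δ) : skDist e x y ≤ ε ∧ skDist e y x ≤ ε := by
  obtain ⟨l, hl, hlt⟩ := exists_forall_lt_of_skDist_lt hxy h
  have hle : ∀ t ∈ Icc (0 : ℝ) 1, |l t - t| ≤ ε ∧ e (x (l t)) (y t) ≤ ε := fun t ht =>
    ⟨(hlt t ht).1.le.trans hδε, (hunif (l t) (SkLambda.mapsTo hl ht) _ (hlt t ht).2).le⟩
  exact ⟨skDist_le_of_forall hl hle, skDist_swap_le_of_forall he hl hle⟩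

end skDist

lemma continuous_skDist_skTop {E κ : Type*} (D : Set (ℝ → E)) (fam : κ → E → E → ℝ) (k : κ)
    (x : D) : Continuous[skTop D fam, _] fun y : D => skDist (fam k) x y :=
  continuous_iInf_dom (continuous_iInf_dom continuous_induced_dom)

theorem continuous_skDist_of_continuous {E J : Type*} [Nonempty J] {ζ : J → E → E → ℝ}
    (hζ : ∀ j, IsPseudometric (ζ j)) (hζdir : Directed (· ≤ ·) ζ) {e : E → E → ℝ}
    (he : IsPseudometric e) (he_cont : ∀ p, Continuous[pseudoTop ζ, _] (e p))
    (x : {f : ℝ → E | @Cadlag E (pseudoTop ζ) f}) :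
    Continuous[skTop {f : ℝ → E | @Cadlag E (pseudoTop ζ) f} ζ, _]
      fun y : {f : ℝ → E | @Cadlag E (pseudoTop ζ) f} => skDist e x y := by
  let _ : TopologicalSpace E := pseudoTop ζ
  let _ := skTop {f : ℝ → E | Cadlag f} ζ
  have hbdd : ∀ u v : {f : ℝ → E | Cadlag f}, PairBounded e u v := fun u v =>
    u.2.pairBounded he he_cont v.2
  refine continuous_iff_continuousAt.2 fun y₀ => Metric.tendsto_nhds.2 fun ε hε => ?_
  obtain ⟨j, δ, hδ, hunif⟩ := y₀.2.exists_uniform_ball hζ hζdir he he_cont (half_pos hε)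
  have hnear : ∀ᶠ y : {f : ℝ → E | Cadlag f} in 𝓝 y₀, skDist (ζ j) y₀ y < min δ (ε / 2) :=
    ((continuous_skDist_skTop _ ζ j y₀).tendsto y₀).eventually_lt_const
      (by rw [skDist_self (hζ j)]; exact lt_min hδ (half_pos hε))
  filter_upwards [hnear] with y hy
  obtain ⟨h₁, h₂⟩ := skDist_le_of_skDist_lt he
    (y₀.2.pairBounded (hζ j) (continuous_pseudoTop ζ j) y.2) (min_le_right _ _)
    (fun t ht b hb => hunif t ht b (hb.trans_le (min_le_left _ _))) hy
  rw [Real.dist_eq, abs_sub_lt_iff]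
  constructor <;>
    linarith [skDist_triangle he (hbdd x y₀) (hbdd y₀ y), skDist_triangle he (hbdd x y) (hbdd y y₀)]

theorem skorohod_topology_comparison_general {E : Type*} {I J : Type*}
    (d : I → E → E → ℝ) (ζ : J → E → E → ℝ)
    (hd : ∀ i, IsPseudometric (d i)) (hζ : ∀ j, IsPseudometric (ζ j))
    (hζsep : ∀ a b : E, a ≠ b → ∃ j, 0 < ζ j a b)
    (hζdir : ∀ j j', ∃ k, ∀ a b, max (ζ j a b) (ζ j' a b) ≤ ζ k a b)
    (hcoarse : ∀ s : Set E, IsOpen[pseudoTop d] s → IsOpen[pseudoTop ζ] s) :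
    (∀ f : ℝ → E, @Cadlag E (pseudoTop ζ) f → @Cadlag E (pseudoTop d) f) ∧
    skTop {f : ℝ → E | @Cadlag E (pseudoTop ζ) f} ζ ≤
      skTop {f : ℝ → E | @Cadlag E (pseudoTop ζ) f} d := by
  have hle : pseudoTop ζ ≤ pseudoTop d := TopologicalSpace.le_def.2 hcoarse
  refine ⟨fun f hf => hf.mono hle, ?_⟩
  rcases isEmpty_or_nonempty J with hJ | hJ
  · have : Subsingleton E :=
      ⟨fun a b => by_contra fun hab => (hζsep a b hab).elim fun j _ => isEmptyElim j⟩
    exact (@DiscreteTopology.eq_bot _ (skTop _ ζ) _).trans_le bot_le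
  · exact le_iInf₂ fun i x => continuous_iff_le_induced.1 <|
      continuous_skDist_of_continuous hζ (directed_of_forall_max_le hζdir) (hd i)
        (fun p => continuous_le_dom hle (continuous_pseudoTop d i p)) x

/-- Jakubowski's comparison theorem: if two separating directed families of pseudometrics
generate topologies `τ` (from `{d i}`) and `σ` (from `{ζ j}`) on `E` with `τ` coarser
than `σ`, then every `σ`-càdlàg function is `τ`-càdlàg, and on the space of `σ`-càdlàg
functions the topology generated by the Skorohod pseudometrics `ζ̃ j` is finer than the
one generated by the `d̃ i`. -/
theorem skorohod_topology_comparison {E : Type*} {I J : Type*}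
    (d : I → E → E → ℝ) (ζ : J → E → E → ℝ)
    (hd : ∀ i, IsPseudometric (d i)) (hζ : ∀ j, IsPseudometric (ζ j))
    (hdsep : ∀ a b : E, a ≠ b → ∃ i, 0 < d i a b)
    (hζsep : ∀ a b : E, a ≠ b → ∃ j, 0 < ζ j a b)
    (hddir : ∀ i i', ∃ k, ∀ a b, max (d i a b) (d i' a b) ≤ d k a b)
    (hζdir : ∀ j j', ∃ k, ∀ a b, max (ζ j a b) (ζ j' a b) ≤ ζ k a b)
    (hcoarse : ∀ s : Set E, IsOpen[pseudoTop d] s → IsOpen[pseudoTop ζ] s) :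
    (∀ f : ℝ → E, @Cadlag E (pseudoTop ζ) f → @Cadlag E (pseudoTop d) f) ∧
    skTop {f : ℝ → E | @Cadlag E (pseudoTop ζ) f} ζ ≤
      skTop {f : ℝ → E | @Cadlag E (pseudoTop ζ) f} d :=
  skorohod_topology_comparison_general d ζ hd hζ hζsep hζdir hcoarse
end
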